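/- Let q be a real number with 0 < q < 1, let d be an odd positive integer, let χ be a Dirichlet character modulo d, and let n be a nonnegative integer. Then the Abel-regularized generalized q-Euler number attached to χ is given by lim_{r→1⁻} 2·∑_{m=0}^∞ χ(m)·(−1)^m · r^m · [m]_q^n = [d]_q^n · ∑_{a=0}^{d−1} χ(a)·(−1)^a · E_{n,q^d}(a/d), where the limit is taken in the complex numbers and E_{n,q^d}(a/d) is the q^d-Euler polynomial evaluated at a/d. -/

import Mathlib

open Filter Finset Topology

/-- The `q`-Euler polynomial `E_{n,q}(x) = 2·(1/(1−q))^n · ∑_{j=0}^n C(n,j)·(−1)^j·q^{xj}/(1+q^j)`,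
where `q^{xj}` is a real power (`rpow`). -/
noncomputable def qEulerPoly (q : ℝ) (n : ℕ) (x : ℝ) : ℝ :=
  2 * (1/(1-q))^n *
    ∑ j ∈ Finset.range (n+1), (n.choose j : ℝ) * (-1)^j * q ^ (x * (j:ℝ)) / (1 + q^j)

/-!
Since `χ(m)(-1)^m r^m = χ(m)(-r)^m`, expanding `[m]_q^n = (1-q)^{-n} ∑_j C(n,j)(-1)^j q^{jm}`
binomially turns the Abel sum into a finite combination of the power series `∑_m χ(m) y^m` at
`y = -r q^j`. As `χ` is `d`-periodic, such a series is the rational function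
`(∑_{a<d} χ(a) y^a) / (1 - y^d)`. Because `d` is odd, its denominator at `r = 1` is
`1 + q^{jd} ≠ 0`, so the limit `r → 1⁻` is obtained by putting `r = 1`; exchanging the sums over
`j` and `a` then produces the `q^d`-Euler polynomials at `a/d`.
-/

section PeriodicGeometric

variable {𝕜 : Type*} [NormedField 𝕜] {d : ℕ}

noncomputable def periodicGeomSum (ψ : ZMod d → 𝕜) (y : 𝕜) : 𝕜 :=
  (∑ a ∈ range d, ψ a * y ^ a) / (1 - y ^ d)

lemma continuousAt_periodicGeomSum (ψ : ZMod d → 𝕜) {y : 𝕜} (hy : 1 - y ^ d ≠ 0) :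
    ContinuousAt (periodicGeomSum ψ) y := by
  unfold periodicGeomSum
  fun_prop (disch := exact hy)

variable [CompleteSpace 𝕜] [NeZero d]

lemma summable_periodic_mul_geometric (ψ : ZMod d → 𝕜) {y : 𝕜} (hy : ‖y‖ < 1) :
    Summable fun m : ℕ => ψ m * y ^ m := by
  obtain ⟨C, hC⟩ := Finite.exists_le fun a => ‖ψ a‖
  refine .of_norm_bounded ((summable_geometric_of_lt_one (norm_nonneg y) hy).mul_left C)
    fun m => ?_
  rw [norm_mul, norm_pow]
  exact mul_le_mul_of_nonneg_right (hC _) (by positivity)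

lemma tsum_periodic_mul_geometric (ψ : ZMod d → 𝕜) {y : 𝕜} (hy : ‖y‖ < 1) :
    ∑' m : ℕ, ψ m * y ^ m = periodicGeomSum ψ y := by
  have hyd : 1 - y ^ d ≠ 0 := by
    refine sub_ne_zero.2 fun h => ?_
    have : ‖y ^ d‖ < 1 := by
      rw [norm_pow]; exact pow_lt_one₀ (norm_nonneg y) hy (NeZero.ne d)
    rw [← h, norm_one] at this
    exact lt_irrefl 1 this
  have hshift (m : ℕ) : ψ ((m + d : ℕ) : ZMod d) * y ^ (m + d) = y ^ d * (ψ m * y ^ m) := by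
    rw [Nat.cast_add, ZMod.natCast_self, add_zero, pow_add]; ring
  -- splitting off the first period leaves `y ^ d` times the whole series
  have h := (summable_periodic_mul_geometric ψ hy).sum_add_tsum_nat_add d
  simp only [hshift, tsum_mul_left] at h
  rw [periodicGeomSum, eq_div_iff hyd]
  linear_combination -h

end PeriodicGeometric

lemma qInt_pow_eq_sum (q : ℝ) (m n : ℕ) :
    ((1 - q ^ m) / (1 - q)) ^ n
      = (1 / (1 - q)) ^ n * ∑ j ∈ range (n + 1), (n.choose j : ℝ) * (-1) ^ j * (q ^ j) ^ m := by
  rw [div_eq_mul_one_div, mul_pow, mul_comm, sub_eq_neg_add 1 (q ^ m), add_pow]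
  congr 1
  refine sum_congr rfl fun j _ => ?_
  rw [neg_pow, ← pow_mul, ← pow_mul, mul_comm m j]
  ring

lemma one_sub_neg_pow_ne_zero {x : ℝ} (hx : 0 ≤ x) {d : ℕ} (hd : Odd d) :
    1 - (-(x : ℂ)) ^ d ≠ 0 := by
  rw [hd.neg_pow, sub_neg_eq_add, ← Complex.ofReal_pow, ← Complex.ofReal_one,
    ← Complex.ofReal_add, Complex.ofReal_ne_zero]
  positivity

lemma qEulerPoly_pow_natCast_div {q : ℝ} {d : ℕ} (hq : 0 ≤ q) (hd : d ≠ 0) (n a : ℕ) :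
    qEulerPoly (q ^ d) n (a / d)
      = 2 * (1 / (1 - q ^ d)) ^ n *
          ∑ j ∈ range (n + 1), (n.choose j : ℝ) * (-1) ^ j * (q ^ j) ^ a / (1 + (q ^ j) ^ d) := by
  unfold qEulerPoly
  congr 1
  refine sum_congr rfl fun j _ => ?_
  have hexp : (q ^ d) ^ ((a / d : ℝ) * j) = (q ^ j) ^ a := by
    rw [← Real.rpow_natCast q d, ← Real.rpow_mul hq, ← pow_mul, ← Real.rpow_natCast q (j * a)]
    congr 1
    field_simp
    push_cast
    ring
  rw [hexp, ← pow_mul q d j, mul_comm d j, pow_mul]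

lemma periodicGeomSum_neg_of_odd {d : ℕ} (ψ : ZMod d → ℂ) (hd : Odd d) (x : ℝ) :
    periodicGeomSum ψ (-(x : ℂ))
      = ∑ a ∈ range d, ψ a * (-1) ^ a * ((x ^ a / (1 + x ^ d) : ℝ) : ℂ) := by
  rw [periodicGeomSum, hd.neg_pow, sub_neg_eq_add, sum_div]
  refine sum_congr rfl fun a _ => ?_
  push_cast
  rw [neg_pow]
  ring

section Abel

variable {d : ℕ} [NeZero d] {q : ℝ}

lemma tsum_mul_qInt_pow (ψ : ZMod d → ℂ) {r : ℝ} (hq : |q| ≤ 1) (hr : |r| < 1) (n : ℕ) :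
    ∑' m : ℕ, ψ m * (-1 : ℂ) ^ m * (r : ℂ) ^ m * ((((1 - q ^ m) / (1 - q)) ^ n : ℝ) : ℂ)
      = ((1 / (1 - q)) ^ n : ℝ) * ∑ j ∈ range (n + 1),
          (n.choose j : ℂ) * (-1) ^ j * periodicGeomSum ψ (-((r * q ^ j : ℝ) : ℂ)) := by
  have hy (j : ℕ) : ‖-((r * q ^ j : ℝ) : ℂ)‖ < 1 := by
    rw [norm_neg, Complex.norm_real, Real.norm_eq_abs, abs_mul, abs_pow]
    exact mul_lt_one_of_nonneg_of_lt_one_left (abs_nonneg r) hr (pow_le_one₀ (abs_nonneg q) hq)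
  have hterm (m : ℕ) :
      ψ m * (-1 : ℂ) ^ m * (r : ℂ) ^ m * ((((1 - q ^ m) / (1 - q)) ^ n : ℝ) : ℂ)
        = ∑ j ∈ range (n + 1), ((1 / (1 - q)) ^ n : ℝ) *
            ((n.choose j : ℂ) * (-1) ^ j * (ψ m * (-((r * q ^ j : ℝ) : ℂ)) ^ m)) := by
    rw [qInt_pow_eq_sum]
    push_cast
    rw [mul_sum, mul_sum]
    refine sum_congr rfl fun j _ => ?_
    ring
  rw [tsum_congr hterm, Summable.tsum_finsetSum fun j _ =>
    ((summable_periodic_mul_geometric ψ (hy j)).mul_left _).mul_left _, mul_sum]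
  refine sum_congr rfl fun j _ => ?_
  rw [tsum_mul_left, tsum_mul_left, tsum_periodic_mul_geometric ψ (hy j)]

lemma tendsto_tsum_mul_qInt_pow (ψ : ZMod d → ℂ) (hq0 : 0 ≤ q) (hq1 : q < 1) (hd : Odd d)
    (n : ℕ) :
    Tendsto (fun r : ℝ => ∑' m : ℕ,
        ψ m * (-1 : ℂ) ^ m * (r : ℂ) ^ m * ((((1 - q ^ m) / (1 - q)) ^ n : ℝ) : ℂ))
      (𝓝[<] 1)
      (𝓝 (((1 / (1 - q)) ^ n : ℝ) * ∑ j ∈ range (n + 1),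
          (n.choose j : ℂ) * (-1) ^ j * periodicGeomSum ψ (-((q ^ j : ℝ) : ℂ)))) := by
  have hq : |q| ≤ 1 := by rw [abs_of_nonneg hq0]; exact hq1.le
  have hcont (j : ℕ) :
      ContinuousAt (fun r : ℝ => periodicGeomSum ψ (-((r * q ^ j : ℝ) : ℂ))) 1 := by
    refine ContinuousAt.comp (g := periodicGeomSum ψ) ?_ (by fun_prop)
    rw [one_mul]
    exact continuousAt_periodicGeomSum ψ (one_sub_neg_pow_ne_zero (pow_nonneg hq0 j) hd)
  have hlim : Tendsto (fun r : ℝ => ((1 / (1 - q)) ^ n : ℝ) * ∑ j ∈ range (n + 1),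
      (n.choose j : ℂ) * (-1) ^ j * periodicGeomSum ψ (-((r * q ^ j : ℝ) : ℂ))) (𝓝 1) _ :=
    tendsto_const_nhds.mul <| tendsto_finsetSum _ fun j _ =>
      tendsto_const_nhds.mul (hcont j).tendsto
  simp only [one_mul] at hlim
  refine (hlim.mono_left nhdsWithin_le_nhds).congr' ?_
  filter_upwards [Ioo_mem_nhdsLT (show (-1 : ℝ) < 1 by norm_num)] with r hr
  exact (tsum_mul_qInt_pow ψ hq (abs_lt.2 hr) n).symm

lemma sum_mul_qEulerPoly_eq (ψ : ZMod d → ℂ) (hq0 : 0 ≤ q) (hq1 : q < 1) (hd : Odd d) (n : ℕ) :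
    ((((1 - q ^ d) / (1 - q)) ^ n : ℝ) : ℂ) *
        ∑ a ∈ range d, ψ a * (-1 : ℂ) ^ a * ((qEulerPoly (q ^ d) n ((a : ℝ) / (d : ℝ)) : ℝ) : ℂ)
      = 2 * (((1 / (1 - q)) ^ n : ℝ) * ∑ j ∈ range (n + 1),
          (n.choose j : ℂ) * (-1) ^ j * periodicGeomSum ψ (-((q ^ j : ℝ) : ℂ))) := by
  have hscale : ((1 - q ^ d) / (1 - q)) ^ n * (1 / (1 - q ^ d)) ^ n = (1 / (1 - q)) ^ n := by
    have : 1 - q ^ d ≠ 0 := (sub_pos.2 (pow_lt_one₀ hq0 hq1 (NeZero.ne d))).ne'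
    rw [← mul_pow]
    field_simp
  simp only [qEulerPoly_pow_natCast_div hq0 (NeZero.ne d), periodicGeomSum_neg_of_odd ψ hd]
  push_cast
  simp only [mul_sum]
  rw [sum_comm]
  refine sum_congr rfl fun j _ => sum_congr rfl fun a _ => ?_
  have hscaleC := congrArg (fun t : ℝ => (t : ℂ)) hscale
  push_cast at hscaleC
  rw [← hscaleC]
  ring

end Abel

/-- for odd `d`, a Dirichlet character `χ` mod `d`, and `n : ℕ`, the
Abel-regularized generalized `q`-Euler number attached to `χ` satisfies
`lim_{r→1⁻} 2·∑ χ(m)(−1)^m r^m [m]_q^n = [d]_q^n · ∑_{a=0}^{d−1} χ(a)(−1)^a E_{n,q^d}(a/d)`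
in `ℂ`. -/
theorem generalized_qEuler_number (q : ℝ) (hq0 : 0 < q) (hq1 : q < 1)
    (d : ℕ) (hd : Odd d) (hdpos : 0 < d) (χ : DirichletCharacter ℂ d) (n : ℕ) :
    Tendsto (fun r : ℝ => 2 * ∑' m : ℕ,
        χ (m : ZMod d) * (-1:ℂ)^m * (r:ℂ)^m * ((((1 - q^m)/(1-q))^n : ℝ) : ℂ))
      (nhdsWithin (1:ℝ) (Set.Iio 1))
      (nhds (((((1 - q^d)/(1-q))^n : ℝ) : ℂ) *
        ∑ a ∈ Finset.range d,
          χ (a : ZMod d) * (-1:ℂ)^a * ((qEulerPoly (q^d) n ((a:ℝ)/(d:ℝ)) : ℝ) : ℂ))) := by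
  have : NeZero d := ⟨hdpos.ne'⟩
  rw [sum_mul_qEulerPoly_eq (fun a => χ a) hq0.le hq1 hd n]
  exact (tendsto_tsum_mul_qInt_pow (fun a => χ a) hq0.le hq1 hd n).const_mul 2
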